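/- arXiv:1511.08341 — 2 statements merged into one kernel-verified Lean document; each statement's English description precedes it below -/
import Mathlib

section
/- Let a : ℝ → ℝ be continuous on [0,1] with 0 < a₀ ≤ a(x) ≤ a₁ for all x ∈ [0,1], and let (u,p) be a classical solution of the damped wave system on [0,T] that is in addition twice continuously differentiable on [0,T] × [0,1]. Then for all 0 ≤ s ≤ t ≤ T one has E¹(t) ≤ 3·e^{−α(t−s)}·E¹(s), where α = (4/3)·a₀³/(8a₀² + 4a₀²a₁ + 2a₀a₁ + a₁⁴) and E¹(t) = (1/2) ∫₀¹ ((∂ₜu(t,x))² + (∂ₜp(t,x))²) dx. -/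
open MeasureTheory Set

/-- The L²(0,1) inner product `(f,g) = ∫₀¹ f g dx`. -/
noncomputable def L2ip (f g : ℝ → ℝ) : ℝ := ∫ x in (0:ℝ)..1, f x * g x

/-- The squared L²(0,1) norm `‖f‖² = ∫₀¹ f² dx`. -/
noncomputable def L2nsq (f : ℝ → ℝ) : ℝ := ∫ x in (0:ℝ)..1, (f x) ^ 2

/-- The L²(0,1) norm. -/
noncomputable def L2nrm (f : ℝ → ℝ) : ℝ := Real.sqrt (L2nsq f)

/-- A classical solution of the damped wave system on `[0,T] × [0,1]`:
`u, p` (time first, space second) with partial derivatives `ut, ux, pt, px`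
which are continuous on `[0,T] × [0,1]`, satisfying
`∂ₜ u + ∂ₓ p + a u = 0`, `∂ₜ p + ∂ₓ u = 0` and `p(t,0) = p(t,1) = 0`. -/
def IsClassicalSolution (T : ℝ) (a : ℝ → ℝ) (u p ut ux pt px : ℝ → ℝ → ℝ) : Prop :=
  (∀ t ∈ Icc (0:ℝ) T, ∀ x ∈ Icc (0:ℝ) 1,
      HasDerivAt (fun s => u s x) (ut t x) t ∧
      HasDerivAt (fun y => u t y) (ux t x) x ∧
      HasDerivAt (fun s => p s x) (pt t x) t ∧
      HasDerivAt (fun y => p t y) (px t x) x) ∧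
  ContinuousOn (Function.uncurry ut) (Icc (0:ℝ) T ×ˢ Icc (0:ℝ) 1) ∧
  ContinuousOn (Function.uncurry ux) (Icc (0:ℝ) T ×ˢ Icc (0:ℝ) 1) ∧
  ContinuousOn (Function.uncurry pt) (Icc (0:ℝ) T ×ˢ Icc (0:ℝ) 1) ∧
  ContinuousOn (Function.uncurry px) (Icc (0:ℝ) T ×ˢ Icc (0:ℝ) 1) ∧
  (∀ t ∈ Icc (0:ℝ) T, ∀ x ∈ Icc (0:ℝ) 1,
      ut t x + px t x + a x * u t x = 0 ∧ pt t x + ux t x = 0) ∧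
  (∀ t ∈ Icc (0:ℝ) T, p t 0 = 0 ∧ p t 1 = 0)

/-!
Differentiating the system in time (using the symmetry of the second derivatives of the
`C²` solution) shows that `(v, q) = (∂ₜu, ∂ₜp)` solves the same damped wave system, so `E¹`
is the ordinary energy `E = ½ ∫ (v² + q²)` of `(v, q)`, and `E' = -∫ a v²`. The dissipation
only sees `v`; to recover the `q`-part, add the cross term `G = ∫ v W`, where `W` is the
zero-mean antiderivative of `-q`. Then `G' = ‖v‖² - v̄² - ‖q‖² - ∫ a v W`, and the
Poincaré–Wirtinger inequality `‖W‖ ≤ ‖q‖` gives `|G| ≤ E`. With `ε = 3α/2` the functional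
`L = E + ε G` satisfies `L' ≤ -α L` and `(1 - ε) E ≤ L ≤ (1 + ε) E` with `ε ≤ 1/2`, hence
`E(t) ≤ 2 L(t) ≤ 2 e^{-α(t-s)} L(s) ≤ 3 e^{-α(t-s)} E(s)`.
-/

open intervalIntegral Function Filter Topology

theorem uIcc_zero_one : uIcc (0:ℝ) 1 = Icc 0 1 := uIcc_of_le zero_le_one

theorem hasDerivAt_intervalIntegral_of_continuous {g g' : ℝ → ℝ → ℝ} {U : Set ℝ} {c d t : ℝ}
    (hU : IsOpen U) (hg : Continuous (uncurry g)) (hg' : Continuous (uncurry g'))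
    (hd : ∀ τ ∈ U, ∀ x ∈ uIcc c d, HasDerivAt (g · x) (g' τ x) τ) (ht : t ∈ U) :
    HasDerivAt (fun τ => ∫ x in c..d, g τ x) (∫ x in c..d, g' t x) t := by
  obtain ⟨δ, hδ, hball⟩ := Metric.nhds_basis_closedBall.mem_iff.1 (hU.mem_nhds ht)
  obtain ⟨C, hC⟩ := ((isCompact_closedBall t δ).prod isCompact_uIcc).exists_bound_of_continuousOn
    hg'.continuousOn
  refine (hasDerivAt_integral_of_dominated_loc_of_deriv_le (bound := fun _ => C)
    (Metric.closedBall_mem_nhds t hδ)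
    (Eventually.of_forall fun τ => (hg.uncurry_left τ).aestronglyMeasurable)
    ((hg.uncurry_left t).intervalIntegrable c d) (hg'.uncurry_left t).aestronglyMeasurable
    (Eventually.of_forall fun x hx τ hτ => hC (τ, x) ⟨hτ, uIoc_subset_uIcc hx⟩)
    intervalIntegrable_const
    (Eventually.of_forall fun x hx τ hτ => hd τ (hball hτ) x (uIoc_subset_uIcc hx))).2

theorem le_mul_exp_of_hasDerivAt_le {f f' : ℝ → ℝ} {α s t : ℝ} (hst : s ≤ t)
    (hf : ContinuousOn f (Icc s t)) (hf' : ∀ τ ∈ Ioo s t, HasDerivAt f (f' τ) τ)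
    (hbound : ∀ τ ∈ Ioo s t, f' τ ≤ -α * f τ) :
    f t ≤ f s * Real.exp (-α * (t - s)) := by
  have hanti : AntitoneOn (fun τ => f τ * Real.exp (α * τ)) (Icc s t) := by
    refine antitoneOn_of_hasDerivWithinAt_nonpos (convex_Icc s t)
      (hf.mul (Real.continuous_exp.comp (continuous_const.mul continuous_id)).continuousOn)
      (f' := fun τ => (f' τ + α * f τ) * Real.exp (α * τ)) (fun τ hτ => ?_) (fun τ hτ => ?_)
    · rw [interior_Icc] at hτ
      have := (hf' τ hτ).mul ((hasDerivAt_id τ).const_mul α).exp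
      exact (this.congr_deriv (by simp only [id_eq, mul_one]; ring)).hasDerivWithinAt
    · rw [interior_Icc] at hτ
      exact mul_nonpos_of_nonpos_of_nonneg (by linarith [hbound τ hτ]) (Real.exp_pos _).le
  have h : f t * Real.exp (α * t) ≤ f s * Real.exp (α * s) := hanti ⟨le_rfl, hst⟩ ⟨hst, le_rfl⟩ hst
  have hsplit : Real.exp (α * s) = Real.exp (-α * (t - s)) * Real.exp (α * t) := by
    rw [← Real.exp_add]; ring_nf
  rw [hsplit, ← mul_assoc] at h
  exact le_of_mul_le_mul_right h (Real.exp_pos _)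

theorem HasDerivAt.eq_zero_of_eventually_const {φ : ℝ → ℝ} {φ' t c : ℝ} (hφ : HasDerivAt φ φ' t)
    (hc : ∀ᶠ s in 𝓝 t, φ s = c) : φ' = 0 :=
  hφ.unique ((hasDerivAt_const t c).congr_of_eventuallyEq hc)

theorem sq_intervalIntegral_le_L2nsq {f : ℝ → ℝ} (hf : ContinuousOn f (Icc 0 1)) :
    (∫ x in (0:ℝ)..1, f x) ^ 2 ≤ L2nsq f := by
  set m := ∫ x in (0:ℝ)..1, f x
  have hint : IntervalIntegrable f volume 0 1 := hf.intervalIntegrable_of_Icc zero_le_one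
  have hint2 : IntervalIntegrable (fun x => f x ^ 2) volume 0 1 :=
    (hf.pow 2).intervalIntegrable_of_Icc zero_le_one
  have h : ∫ x in (0:ℝ)..1, (f x - m) ^ 2 = L2nsq f - m ^ 2 := by
    simp_rw [sub_sq]
    rw [integral_add (hint2.sub (hint.const_mul _ |>.mul_const _)) intervalIntegrable_const,
      integral_sub hint2 (hint.const_mul _ |>.mul_const _), intervalIntegral.integral_mul_const,
      intervalIntegral.integral_const_mul]
    simp only [L2nsq, intervalIntegral.integral_const, sub_zero, smul_eq_mul, one_mul]
    ring
  have hnonneg : 0 ≤ ∫ x in (0:ℝ)..1, (f x - m) ^ 2 :=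
    intervalIntegral.integral_nonneg zero_le_one fun x _ => sq_nonneg _
  linarith

theorem abs_sub_le_integral_abs_deriv {g g' : ℝ → ℝ} {a b x y : ℝ}
    (hd : ∀ z ∈ Icc a b, HasDerivAt g (g' z) z) (hg' : ContinuousOn g' (Icc a b))
    (hx : x ∈ Icc a b) (hy : y ∈ Icc a b) :
    |g x - g y| ≤ ∫ z in a..b, |g' z| := by
  wlog hyx : y ≤ x generalizing x y
  · rw [abs_sub_comm]; exact this hy hx (le_of_not_ge hyx)
  have hsub : Icc y x ⊆ Icc a b := Icc_subset_Icc hy.1 hx.2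
  rw [← integral_eq_sub_of_hasDerivAt (fun z hz => hd z (hsub (uIcc_of_le hyx ▸ hz)))
    ((hg'.mono hsub).intervalIntegrable_of_Icc hyx)]
  calc |∫ z in y..x, g' z| ≤ ∫ z in y..x, |g' z| := abs_integral_le_integral_abs hyx
    _ ≤ ∫ z in a..b, |g' z| :=
      integral_mono_interval hy.1 hyx hx.2 (Eventually.of_forall fun z => abs_nonneg _)
        (hg'.abs.intervalIntegrable_of_Icc (hy.1.trans (hyx.trans hx.2)))

theorem L2nsq_average_sub_le {g g' : ℝ → ℝ}
    (hd : ∀ x ∈ Icc (0:ℝ) 1, HasDerivAt g (g' x) x) (hg' : ContinuousOn g' (Icc 0 1)) :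
    L2nsq (fun x => (∫ y in (0:ℝ)..1, g y) - g x) ≤ L2nsq g' := by
  set C := ∫ z in (0:ℝ)..1, |g' z|
  have hg : ContinuousOn g (Icc 0 1) := fun x hx => (hd x hx).continuousAt.continuousWithinAt
  have hdev : ∀ x ∈ Icc (0:ℝ) 1, |(∫ y in (0:ℝ)..1, g y) - g x| ≤ C := by
    intro x hx
    have hmean : (∫ y in (0:ℝ)..1, g y) - g x = ∫ y in (0:ℝ)..1, (g y - g x) := by
      simp [integral_sub (hg.intervalIntegrable_of_Icc zero_le_one) intervalIntegrable_const]
    rw [hmean, ← Real.norm_eq_abs]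
    simpa using intervalIntegral.norm_integral_le_of_norm_le_const (f := fun y => g y - g x)
      fun y hy => abs_sub_le_integral_abs_deriv hd hg'
        (Ioc_subset_Icc_self (uIoc_of_le (zero_le_one' ℝ) ▸ hy)) hx
  calc L2nsq (fun x => (∫ y in (0:ℝ)..1, g y) - g x) ≤ ∫ _ in (0:ℝ)..1, C ^ 2 :=
        integral_mono_on zero_le_one
          (((continuousOn_const.sub hg).pow 2).intervalIntegrable_of_Icc zero_le_one)
          intervalIntegrable_const fun x hx => sq_le_sq' (abs_le.1 (hdev x hx)).1
            (abs_le.1 (hdev x hx)).2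
    _ = C ^ 2 := by simp
    _ ≤ L2nsq (fun x => |g' x|) := sq_intervalIntegral_le_L2nsq hg'.abs
    _ = L2nsq g' := by simp only [L2nsq, sq_abs]

section Slices

variable {E : Type*} [NormedAddCommGroup E] [NormedSpace ℝ E] {F : ℝ × ℝ → E}
  {F' : ℝ × ℝ →L[ℝ] E} {s t : Set ℝ} {a b : ℝ}

theorem HasFDerivWithinAt.hasDerivWithinAt_fst_slice (hF : HasFDerivWithinAt F F' (s ×ˢ t) (a, b))
    (hb : b ∈ t) : HasDerivWithinAt (fun r => F (r, b)) (F' (1, 0)) s a :=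
  hF.comp_hasDerivWithinAt a ((hasDerivAt_id a).prodMk (hasDerivAt_const a b)).hasDerivWithinAt
    fun _ hr => mk_mem_prod hr hb

theorem HasFDerivWithinAt.hasDerivWithinAt_snd_slice (hF : HasFDerivWithinAt F F' (s ×ˢ t) (a, b))
    (ha : a ∈ s) : HasDerivWithinAt (fun y => F (a, y)) (F' (0, 1)) t b :=
  hF.comp_hasDerivWithinAt b ((hasDerivAt_const b a).prodMk (hasDerivAt_id b)).hasDerivWithinAt
    fun _ hy => mk_mem_prod ha hy

end Slices

theorem exists_second_partials_of_contDiffOn {t₀ t₁ x₀ x₁ : ℝ} (ht : t₀ < t₁) (hx : x₀ < x₁)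
    {f ft fx : ℝ → ℝ → ℝ} (hf : ContDiffOn ℝ 2 (uncurry f) (Icc t₀ t₁ ×ˢ Icc x₀ x₁))
    (hft : ∀ t ∈ Icc t₀ t₁, ∀ x ∈ Icc x₀ x₁, HasDerivWithinAt (f · x) (ft t x) (Icc t₀ t₁) t)
    (hfx : ∀ t ∈ Icc t₀ t₁, ∀ x ∈ Icc x₀ x₁, HasDerivWithinAt (f t ·) (fx t x) (Icc x₀ x₁) x) :
    ∃ ftt ftx : ℝ → ℝ → ℝ,
      ContinuousOn (uncurry ftt) (Icc t₀ t₁ ×ˢ Icc x₀ x₁) ∧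
      ContinuousOn (uncurry ftx) (Icc t₀ t₁ ×ˢ Icc x₀ x₁) ∧
      ∀ t ∈ Icc t₀ t₁, ∀ x ∈ Icc x₀ x₁,
        HasDerivWithinAt (ft · x) (ftt t x) (Icc t₀ t₁) t ∧
        HasDerivWithinAt (ft t ·) (ftx t x) (Icc x₀ x₁) x ∧
        HasDerivWithinAt (fx · x) (ftx t x) (Icc t₀ t₁) t := by
  set R := Icc t₀ t₁ ×ˢ Icc x₀ x₁
  have hR : UniqueDiffOn ℝ R := (uniqueDiffOn_Icc ht).prod (uniqueDiffOn_Icc hx)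
  set F₁ := fderivWithin ℝ (uncurry f) R
  set F₂ := fderivWithin ℝ F₁ R
  have hF₁ : ContDiffOn ℝ 1 F₁ R := hf.fderivWithin hR (by norm_num)
  have hf' : ∀ z ∈ R, HasFDerivWithinAt (uncurry f) (F₁ z) R z := fun z hz =>
    (hf.differentiableOn (by norm_num) z hz).hasFDerivWithinAt
  have hF₁' : ∀ z ∈ R, HasFDerivWithinAt F₁ (F₂ z) R z := fun z hz =>
    (hF₁.differentiableOn one_ne_zero z hz).hasFDerivWithinAt
  have hF₁t : ∀ t ∈ Icc t₀ t₁, ∀ x ∈ Icc x₀ x₁, ft t x = F₁ (t, x) (1, 0) := fun t htm x hxm =>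
    (uniqueDiffOn_Icc ht t htm).eq_deriv _ (hft t htm x hxm)
      ((hf' _ ⟨htm, hxm⟩).hasDerivWithinAt_fst_slice hxm)
  have hF₁x : ∀ t ∈ Icc t₀ t₁, ∀ x ∈ Icc x₀ x₁, fx t x = F₁ (t, x) (0, 1) := fun t htm x hxm =>
    (uniqueDiffOn_Icc hx x hxm).eq_deriv _ (hfx t htm x hxm)
      ((hf' _ ⟨htm, hxm⟩).hasDerivWithinAt_snd_slice htm)
  have hF₂cont : ContinuousOn F₂ R := hF₁.continuousOn_fderivWithin hR le_rfl
  refine ⟨fun t x => F₂ (t, x) (1, 0) (1, 0), fun t x => F₂ (t, x) (0, 1) (1, 0),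
    (hF₂cont.clm_apply continuousOn_const).clm_apply continuousOn_const,
    (hF₂cont.clm_apply continuousOn_const).clm_apply continuousOn_const,
    fun t htm x hxm => ?_⟩
  have hz : (t, x) ∈ R := ⟨htm, hxm⟩
  have hsymm : F₂ (t, x) (1, 0) (0, 1) = F₂ (t, x) (0, 1) (1, 0) := by
    have hcl : (t, x) ∈ closure (interior R) := by
      rwa [interior_prod_eq, interior_Icc, interior_Icc, closure_prod_eq, closure_Ioo ht.ne,
        closure_Ioo hx.ne]
    exact ((hf _ hz).isSymmSndFDerivWithinAt (by simp) hR hcl hz).eq _ _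
  have hslice_t : ∀ w, HasDerivWithinAt (fun r => F₁ (r, x) w) (F₂ (t, x) (1, 0) w) (Icc t₀ t₁) t :=
    fun w => ((hF₁' _ hz).hasDerivWithinAt_fst_slice hxm).clm_apply (hasDerivWithinAt_const _ _ w)
      |>.congr_deriv (by simp)
  have hslice_x : ∀ w, HasDerivWithinAt (fun y => F₁ (t, y) w) (F₂ (t, x) (0, 1) w) (Icc x₀ x₁) x :=
    fun w => ((hF₁' _ hz).hasDerivWithinAt_snd_slice htm).clm_apply (hasDerivWithinAt_const _ _ w)
      |>.congr_deriv (by simp)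
  refine ⟨(hslice_t (1, 0)).congr (fun r hr => hF₁t r hr x hxm) (hF₁t t htm x hxm),
    (hslice_x (1, 0)).congr (fun y hy => hF₁t t htm y hy) (hF₁t t htm x hxm), ?_⟩
  show HasDerivWithinAt _ (F₂ (t, x) (0, 1) (1, 0)) _ _
  rw [← hsymm]
  exact (hslice_t (0, 1)).congr (fun r hr => hF₁x r hr x hxm) (hF₁x t htm x hxm)

section RectExtend

variable {t₀ t₁ x₀ x₁ : ℝ} (ht : t₀ ≤ t₁) (hx : x₀ ≤ x₁)

noncomputable def rectExtend (f : ℝ → ℝ → ℝ) (t x : ℝ) : ℝ :=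
  f (projIcc t₀ t₁ ht t) (projIcc x₀ x₁ hx x)

variable {ht hx} {f : ℝ → ℝ → ℝ} {t x : ℝ}

theorem rectExtend_of_mem (htm : t ∈ Icc t₀ t₁) (hxm : x ∈ Icc x₀ x₁) :
    rectExtend ht hx f t x = f t x := by
  simp [rectExtend, projIcc_of_mem ht htm, projIcc_of_mem hx hxm]

theorem continuous_rectExtend (hf : ContinuousOn (uncurry f) (Icc t₀ t₁ ×ˢ Icc x₀ x₁)) :
    Continuous (uncurry (rectExtend ht hx f)) :=
  hf.comp_continuous
    ((continuous_subtype_val.comp (continuous_projIcc.comp continuous_fst)).prodMk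
      (continuous_subtype_val.comp (continuous_projIcc.comp continuous_snd)))
    fun z => mk_mem_prod (projIcc t₀ t₁ ht z.1).2 (projIcc x₀ x₁ hx z.2).2

theorem hasDerivAt_rectExtend_fst {f' : ℝ} (htm : t ∈ Ioo t₀ t₁) (hxm : x ∈ Icc x₀ x₁)
    (hf : HasDerivWithinAt (f · x) f' (Icc t₀ t₁) t) :
    HasDerivAt (rectExtend ht hx f · x) f' t :=
  (hf.hasDerivAt (Icc_mem_nhds htm.1 htm.2)).congr_of_eventuallyEq
    (eventually_of_mem (Icc_mem_nhds htm.1 htm.2) fun _ hr => rectExtend_of_mem hr hxm)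

theorem hasDerivAt_rectExtend_snd {f' : ℝ} (htm : t ∈ Icc t₀ t₁) (hxm : x ∈ Ioo x₀ x₁)
    (hf : HasDerivWithinAt (f t ·) f' (Icc x₀ x₁) x) :
    HasDerivAt (rectExtend ht hx f t ·) f' x :=
  (hf.hasDerivAt (Icc_mem_nhds hxm.1 hxm.2)).congr_of_eventuallyEq
    (eventually_of_mem (Icc_mem_nhds hxm.1 hxm.2) fun _ hy => rectExtend_of_mem htm hy)

end RectExtend

/-- Continuity is required on all of `ℝ²`, as the parametric-integral lemmas need it; a solution
on the closed rectangle is brought into this form by `rectExtend`. -/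
structure DampedWaveSystem (T : ℝ) (a : ℝ → ℝ) (v q vt vx qt qx : ℝ → ℝ → ℝ) : Prop where
  continuousOn_a : ContinuousOn a (Icc 0 1)
  continuous_v : Continuous (uncurry v)
  continuous_q : Continuous (uncurry q)
  continuous_vt : Continuous (uncurry vt)
  continuous_vx : Continuous (uncurry vx)
  continuous_qt : Continuous (uncurry qt)
  continuous_qx : Continuous (uncurry qx)
  hasDerivAt_vt : ∀ t ∈ Ioo 0 T, ∀ x ∈ Icc (0:ℝ) 1, HasDerivAt (v · x) (vt t x) t
  hasDerivAt_qt : ∀ t ∈ Ioo 0 T, ∀ x ∈ Icc (0:ℝ) 1, HasDerivAt (q · x) (qt t x) t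
  hasDerivAt_vx : ∀ t ∈ Ioo 0 T, ∀ x ∈ Ioo (0:ℝ) 1, HasDerivAt (v t ·) (vx t x) x
  hasDerivAt_qx : ∀ t ∈ Ioo 0 T, ∀ x ∈ Ioo (0:ℝ) 1, HasDerivAt (q t ·) (qx t x) x
  pde_v : ∀ t ∈ Ioo 0 T, ∀ x ∈ Icc (0:ℝ) 1, vt t x + qx t x + a x * v t x = 0
  pde_q : ∀ t ∈ Ioo 0 T, ∀ x ∈ Icc (0:ℝ) 1, qt t x + vx t x = 0
  boundary : ∀ t ∈ Ioo 0 T, q t 0 = 0 ∧ q t 1 = 0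

theorem IsClassicalSolution.dampedWaveSystem_timeDeriv {T : ℝ} {a : ℝ → ℝ}
    {u p ut ux pt px : ℝ → ℝ → ℝ} (hT : 0 < T) (ha : ContinuousOn a (Icc 0 1))
    (hsol : IsClassicalSolution T a u p ut ux pt px)
    (hu2 : ContDiffOn ℝ 2 (uncurry u) (Icc 0 T ×ˢ Icc 0 1))
    (hp2 : ContDiffOn ℝ 2 (uncurry p) (Icc 0 T ×ˢ Icc 0 1)) :
    ∃ vt vx qt qx : ℝ → ℝ → ℝ, DampedWaveSystem T a
      (rectExtend hT.le zero_le_one ut) (rectExtend hT.le zero_le_one pt) vt vx qt qx := by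
  obtain ⟨hder, hutc, -, hptc, -, hpde, hbc⟩ := hsol
  obtain ⟨utt, utx, huttc, hutxc, hut⟩ := exists_second_partials_of_contDiffOn hT one_pos hu2
    (fun t ht x hx => (hder t ht x hx).1.hasDerivWithinAt)
    (fun t ht x hx => (hder t ht x hx).2.1.hasDerivWithinAt)
  obtain ⟨ptt, ptx, hpttc, hptxc, hpt⟩ := exists_second_partials_of_contDiffOn hT one_pos hp2
    (fun t ht x hx => (hder t ht x hx).2.2.1.hasDerivWithinAt)
    (fun t ht x hx => (hder t ht x hx).2.2.2.hasDerivWithinAt)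
  have hnhds : ∀ t ∈ Ioo 0 T, Icc 0 T ∈ 𝓝 t := fun t ht => Icc_mem_nhds ht.1 ht.2
  refine ⟨rectExtend hT.le zero_le_one utt, rectExtend hT.le zero_le_one utx,
    rectExtend hT.le zero_le_one ptt, rectExtend hT.le zero_le_one ptx,
    { continuousOn_a := ha
      continuous_v := continuous_rectExtend hutc
      continuous_q := continuous_rectExtend hptc
      continuous_vt := continuous_rectExtend huttc
      continuous_vx := continuous_rectExtend hutxc
      continuous_qt := continuous_rectExtend hpttc
      continuous_qx := continuous_rectExtend hptxc
      hasDerivAt_vt := fun t ht x hx => ?_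
      hasDerivAt_qt := fun t ht x hx => ?_
      hasDerivAt_vx := fun t ht x hx => ?_
      hasDerivAt_qx := fun t ht x hx => ?_
      pde_v := fun t ht x hx => ?_
      pde_q := fun t ht x hx => ?_
      boundary := fun t ht => ?_ }⟩
  all_goals have ht' : t ∈ Icc 0 T := Ioo_subset_Icc_self ht
  · rw [rectExtend_of_mem ht' hx]
    exact hasDerivAt_rectExtend_fst ht hx (hut t ht' x hx).1
  · rw [rectExtend_of_mem ht' hx]
    exact hasDerivAt_rectExtend_fst ht hx (hpt t ht' x hx).1
  · rw [rectExtend_of_mem ht' (Ioo_subset_Icc_self hx)]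
    exact hasDerivAt_rectExtend_snd ht' hx (hut t ht' x (Ioo_subset_Icc_self hx)).2.1
  · rw [rectExtend_of_mem ht' (Ioo_subset_Icc_self hx)]
    exact hasDerivAt_rectExtend_snd ht' hx (hpt t ht' x (Ioo_subset_Icc_self hx)).2.1
  · -- `∂ₜ` of the first equation, with `∂ₜ∂ₓp = ∂ₓ∂ₜp`
    simp only [rectExtend_of_mem ht' hx]
    refine HasDerivAt.eq_zero_of_eventually_const (φ := fun s => ut s x + px s x + a x * u s x)
      ?_ (eventually_of_mem (hnhds t ht) fun s hs => (hpde s hs x hx).1)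
    exact (((hut t ht' x hx).1.hasDerivAt (hnhds t ht)).add
      ((hpt t ht' x hx).2.2.hasDerivAt (hnhds t ht))).add ((hder t ht' x hx).1.const_mul (a x))
  · simp only [rectExtend_of_mem ht' hx]
    refine HasDerivAt.eq_zero_of_eventually_const (φ := fun s => pt s x + ux s x)
      ?_ (eventually_of_mem (hnhds t ht) fun s hs => (hpde s hs x hx).2)
    exact ((hpt t ht' x hx).1.hasDerivAt (hnhds t ht)).add
      ((hut t ht' x hx).2.2.hasDerivAt (hnhds t ht))
  · rw [rectExtend_of_mem ht' (left_mem_Icc.2 zero_le_one),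
      rectExtend_of_mem ht' (right_mem_Icc.2 zero_le_one)]
    exact ⟨(hder t ht' 0 (left_mem_Icc.2 zero_le_one)).2.2.1.eq_zero_of_eventually_const
        (eventually_of_mem (hnhds t ht) fun s hs => (hbc s hs).1),
      (hder t ht' 1 (right_mem_Icc.2 zero_le_one)).2.2.1.eq_zero_of_eventually_const
        (eventually_of_mem (hnhds t ht) fun s hs => (hbc s hs).2)⟩

noncomputable def energy (v q : ℝ → ℝ → ℝ) (t : ℝ) : ℝ :=
  (1/2) * ∫ x in (0:ℝ)..1, ((v t x) ^ 2 + (q t x) ^ 2)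

noncomputable def spacePrimitive (q : ℝ → ℝ → ℝ) (t x : ℝ) : ℝ := ∫ y in (0:ℝ)..x, q t y

/-- Along a solution `∂ₜ W = v - v̄`, while `∂ₓ W = -q`; hence the name. -/
noncomputable def potential (q : ℝ → ℝ → ℝ) (t x : ℝ) : ℝ :=
  (∫ y in (0:ℝ)..1, spacePrimitive q t y) - spacePrimitive q t x

section Potential

variable {v q : ℝ → ℝ → ℝ}

theorem continuous_spacePrimitive (hq : Continuous (uncurry q)) :
    Continuous (uncurry (spacePrimitive q)) :=
  continuous_parametric_primitive_of_continuous hq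

theorem continuous_potential (hq : Continuous (uncurry q)) : Continuous (uncurry (potential q)) :=
  (continuous_parametric_intervalIntegral_of_continuous' (continuous_spacePrimitive hq) 0 1
    |>.comp continuous_fst).sub (continuous_spacePrimitive hq)

theorem hasDerivAt_spacePrimitive (hq : Continuous (uncurry q)) (t x : ℝ) :
    HasDerivAt (spacePrimitive q t) (q t x) x :=
  integral_hasDerivAt_right ((hq.uncurry_left t).intervalIntegrable 0 x)
    ((hq.uncurry_left t).stronglyMeasurableAtFilter volume (𝓝 x)) (hq.uncurry_left t).continuousAt

theorem L2nsq_potential_le (hq : Continuous (uncurry q)) (t : ℝ) :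
    L2nsq (potential q t) ≤ L2nsq (q t) :=
  L2nsq_average_sub_le (fun x _ => hasDerivAt_spacePrimitive hq t x)
    (hq.uncurry_left t).continuousOn

theorem energy_eq (hv : Continuous (uncurry v)) (hq : Continuous (uncurry q)) (t : ℝ) :
    energy v q t = (1/2) * (L2nsq (v t) + L2nsq (q t)) := by
  rw [energy, integral_add (((hv.uncurry_left t).fun_pow 2).intervalIntegrable 0 1)
    (((hq.uncurry_left t).fun_pow 2).intervalIntegrable 0 1)]
  rfl

theorem abs_L2ip_potential_le_energy (hv : Continuous (uncurry v)) (hq : Continuous (uncurry q))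
    (t : ℝ) : |L2ip (v t) (potential q t)| ≤ energy v q t := by
  have hvt := hv.uncurry_left t
  have hW := (continuous_potential hq).uncurry_left t
  have hsplit : ∫ x in (0:ℝ)..1, (1/2) * ((v t x) ^ 2 + (potential q t x) ^ 2)
      = (1/2) * (L2nsq (v t) + L2nsq (potential q t)) := by
    rw [intervalIntegral.integral_const_mul,
      integral_add ((hvt.fun_pow 2).intervalIntegrable 0 1) ((hW.fun_pow 2).intervalIntegrable 0 1)]
    rfl
  calc |L2ip (v t) (potential q t)| ≤ ∫ x in (0:ℝ)..1, |v t x * potential q t x| :=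
        abs_integral_le_integral_abs zero_le_one
    _ ≤ ∫ x in (0:ℝ)..1, (1/2) * ((v t x) ^ 2 + (potential q t x) ^ 2) := by
        refine integral_mono_on zero_le_one ((hvt.mul hW).abs.intervalIntegrable 0 1)
          (((hvt.fun_pow 2).add (hW.fun_pow 2)).const_mul _ |>.intervalIntegrable 0 1) fun x _ => ?_
        rw [abs_mul]
        nlinarith [two_mul_le_add_sq |v t x| |potential q t x|, sq_abs (v t x),
          sq_abs (potential q t x)]
    _ ≤ energy v q t := by
        rw [hsplit, energy_eq hv hq]
        linarith [L2nsq_potential_le hq t]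

theorem hasDerivAt_potential (hq : Continuous (uncurry q)) (t x : ℝ) :
    HasDerivAt (potential q t) (-q t x) x := by
  have hd := (hasDerivAt_const x (∫ y in (0:ℝ)..1, spacePrimitive q t y)).fun_sub
    (hasDerivAt_spacePrimitive hq t x)
  rwa [zero_sub] at hd

theorem neg_integral_mul_potential_le {a : ℝ → ℝ} {a₁ : ℝ} (ha : ContinuousOn a (Icc 0 1))
    (hbd : ∀ x ∈ Icc (0:ℝ) 1, |a x| ≤ a₁) (hv : Continuous (uncurry v))
    (hq : Continuous (uncurry q)) (t : ℝ) :
    -∫ x in (0:ℝ)..1, a x * (v t x * potential q t x)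
      ≤ a₁ ^ 2 / 2 * L2nsq (v t) + 1 / 2 * L2nsq (q t) := by
  have hvt := hv.uncurry_left t
  have hW := (continuous_potential hq).uncurry_left t
  have hsplit : ∫ x in (0:ℝ)..1, (a₁ ^ 2 / 2 * v t x ^ 2 + 1 / 2 * potential q t x ^ 2)
      = a₁ ^ 2 / 2 * L2nsq (v t) + 1 / 2 * L2nsq (potential q t) := by
    rw [integral_add (((hvt.fun_pow 2).const_mul _).intervalIntegrable 0 1)
      (((hW.fun_pow 2).const_mul _).intervalIntegrable 0 1), intervalIntegral.integral_const_mul,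
      intervalIntegral.integral_const_mul]
    rfl
  rw [← intervalIntegral.integral_neg]
  calc ∫ x in (0:ℝ)..1, -(a x * (v t x * potential q t x))
      ≤ ∫ x in (0:ℝ)..1, (a₁ ^ 2 / 2 * v t x ^ 2 + 1 / 2 * potential q t x ^ 2) := by
        refine integral_mono_on zero_le_one
          ((ha.mul (hvt.fun_mul hW).continuousOn).neg.intervalIntegrable_of_Icc zero_le_one)
          ((((hvt.fun_pow 2).const_mul _).add ((hW.fun_pow 2).const_mul _)).intervalIntegrable 0 1)
          fun x hx => ?_
        have hprod : -(a x * (v t x * potential q t x)) ≤ a₁ * (|v t x| * |potential q t x|) := by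
          rw [← abs_mul]
          calc -(a x * (v t x * potential q t x)) ≤ |a x| * |v t x * potential q t x| := by
                rw [← abs_mul]; exact neg_le_abs _
            _ ≤ a₁ * |v t x * potential q t x| :=
                mul_le_mul_of_nonneg_right (hbd x hx) (abs_nonneg _)
        nlinarith [two_mul_le_add_sq (a₁ * |v t x|) |potential q t x|, sq_abs (v t x),
          sq_abs (potential q t x)]
    _ ≤ a₁ ^ 2 / 2 * L2nsq (v t) + 1 / 2 * L2nsq (q t) := by
        rw [hsplit]; linarith [L2nsq_potential_le hq t]

end Potential

/-- Of this constant only `decayRate_le_one_third` and `decayRate_mul_le` are used: with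
`ε = 3α/2` they are exactly the coefficient conditions of `lyapunov_deriv_le`. -/
noncomputable def decayRate (a₀ a₁ : ℝ) : ℝ :=
  (4/3) * a₀ ^ 3 / (8 * a₀ ^ 2 + 4 * a₀ ^ 2 * a₁ + 2 * a₀ * a₁ + a₁ ^ 4)

section DecayRate

variable {a₀ a₁ : ℝ}

theorem decayRate_pos (ha₀ : 0 < a₀) (ha₀₁ : a₀ ≤ a₁) : 0 < decayRate a₀ a₁ := by
  have : 0 < a₁ := ha₀.trans_le ha₀₁
  unfold decayRate; positivity

theorem decayRate_le_one_third (ha₀ : 0 < a₀) (ha₀₁ : a₀ ≤ a₁) : decayRate a₀ a₁ ≤ 1/3 := by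
  have : 0 < a₁ := ha₀.trans_le ha₀₁
  unfold decayRate
  rw [div_le_iff₀ (by positivity)]
  nlinarith [mul_le_mul_of_nonneg_left ha₀₁ (sq_nonneg a₀), mul_pos ha₀ this,
    pow_pos this 4, sq_nonneg a₀]

theorem decayRate_mul_le (ha₀ : 0 < a₀) (ha₀₁ : a₀ ≤ a₁) :
    decayRate a₀ a₁ * (3 + a₁ ^ 2) ≤ 4/3 * a₀ := by
  have : 0 < a₁ := ha₀.trans_le ha₀₁
  unfold decayRate
  rw [div_mul_eq_mul_div, div_le_iff₀ (by positivity)]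
  have hsq : a₀ ^ 2 * a₁ ^ 2 ≤ a₁ ^ 4 := by
    nlinarith [mul_le_mul_of_nonneg_right (pow_le_pow_left₀ ha₀.le ha₀₁ 2) (sq_nonneg a₁)]
  nlinarith [mul_le_mul_of_nonneg_left hsq ha₀.le, mul_pos (mul_pos ha₀ ha₀) this,
    mul_pos ha₀ this, pow_pos ha₀ 3]

end DecayRate

noncomputable def lyapunov (ε : ℝ) (v q : ℝ → ℝ → ℝ) (t : ℝ) : ℝ :=
  energy v q t + ε * L2ip (v t) (potential q t)

theorem continuous_lyapunov {v q : ℝ → ℝ → ℝ} (hv : Continuous (uncurry v))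
    (hq : Continuous (uncurry q)) (ε : ℝ) : Continuous (lyapunov ε v q) := by
  have hW := continuous_potential hq
  unfold lyapunov energy L2ip
  fun_prop

namespace DampedWaveSystem

variable {T : ℝ} {a : ℝ → ℝ} {v q vt vx qt qx : ℝ → ℝ → ℝ} {t a₀ a₁ : ℝ}

theorem hasDerivAt_spacePrimitive_time (h : DampedWaveSystem T a v q vt vx qt qx)
    (ht : t ∈ Ioo 0 T) {c : ℝ} (hc : c ∈ Icc (0:ℝ) 1) :
    HasDerivAt (spacePrimitive q · c) (v t 0 - v t c) t := by
  have hsub : uIcc 0 c ⊆ Icc (0:ℝ) 1 := by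
    rw [uIcc_of_le hc.1]; exact Icc_subset_Icc_right hc.2
  have hd := hasDerivAt_intervalIntegral_of_continuous isOpen_Ioo h.continuous_q h.continuous_qt
    (fun τ hτ x hx => h.hasDerivAt_qt τ hτ x (hsub hx)) ht
  have hval : ∫ x in (0:ℝ)..c, qt t x = v t 0 - v t c := by
    rw [integral_congr fun x hx => show qt t x = -vx t x by linarith [h.pde_q t ht x (hsub hx)],
      intervalIntegral.integral_neg, integral_eq_sub_of_hasDerivAt_of_le hc.1
        (h.continuous_v.uncurry_left t).continuousOn
        (fun x hx => h.hasDerivAt_vx t ht x ⟨hx.1, hx.2.trans_le hc.2⟩)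
        ((h.continuous_vx.uncurry_left t).intervalIntegrable 0 c)]
    ring
  exact hval ▸ hd

theorem hasDerivAt_potential_time (h : DampedWaveSystem T a v q vt vx qt qx)
    (ht : t ∈ Ioo 0 T) {x : ℝ} (hx : x ∈ Icc (0:ℝ) 1) :
    HasDerivAt (potential q · x) (v t x - ∫ y in (0:ℝ)..1, v t y) t := by
  have hmean := hasDerivAt_intervalIntegral_of_continuous (g' := fun τ y => v τ 0 - v τ y)
    isOpen_Ioo (continuous_spacePrimitive h.continuous_q)
    (by have := h.continuous_v; fun_prop)
    (fun τ hτ y hy => h.hasDerivAt_spacePrimitive_time hτ (uIcc_zero_one ▸ hy)) ht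
  rw [integral_sub intervalIntegrable_const
    ((h.continuous_v.uncurry_left t).intervalIntegrable 0 1), intervalIntegral.integral_const]
    at hmean
  exact (hmean.sub (h.hasDerivAt_spacePrimitive_time ht hx)).congr_deriv (by simp)

theorem intervalIntegrable_a_mul (h : DampedWaveSystem T a v q vt vx qt qx) {f : ℝ → ℝ}
    (hf : Continuous f) : IntervalIntegrable (fun x => a x * f x) volume 0 1 :=
  (h.continuousOn_a.mul hf.continuousOn).intervalIntegrable_of_Icc zero_le_one

theorem intervalIntegrable_flux (h : DampedWaveSystem T a v q vt vx qt qx) (t : ℝ) :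
    IntervalIntegrable (fun x => vx t x * q t x + v t x * qx t x) volume 0 1 :=
  (((h.continuous_vx.uncurry_left t).fun_mul (h.continuous_q.uncurry_left t)).fun_add
    ((h.continuous_v.uncurry_left t).fun_mul (h.continuous_qx.uncurry_left t)))
    |>.intervalIntegrable 0 1

theorem integral_flux_eq_zero (h : DampedWaveSystem T a v q vt vx qt qx) (ht : t ∈ Ioo 0 T) :
    ∫ x in (0:ℝ)..1, (vx t x * q t x + v t x * qx t x) = 0 := by
  rw [integral_deriv_mul_eq_sub_of_hasDerivAt (h.continuous_v.uncurry_left t).continuousOn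
    (h.continuous_q.uncurry_left t).continuousOn
    (fun x hx => h.hasDerivAt_vx t ht x (by simpa using hx))
    (fun x hx => h.hasDerivAt_qx t ht x (by simpa using hx))
    ((h.continuous_vx.uncurry_left t).intervalIntegrable 0 1)
    ((h.continuous_qx.uncurry_left t).intervalIntegrable 0 1), (h.boundary t ht).1,
    (h.boundary t ht).2]
  ring

theorem hasDerivAt_energy (h : DampedWaveSystem T a v q vt vx qt qx) (ht : t ∈ Ioo 0 T) :
    HasDerivAt (energy v q) (-∫ x in (0:ℝ)..1, a x * v t x ^ 2) t := by
  have hd := hasDerivAt_intervalIntegral_of_continuous (g := fun τ x => v τ x ^ 2 + q τ x ^ 2)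
    (g' := fun τ x => 2 * v τ x * vt τ x + 2 * q τ x * qt τ x) isOpen_Ioo (by
      have := h.continuous_v; have := h.continuous_q; fun_prop) (by
      have := h.continuous_v; have := h.continuous_q; have := h.continuous_vt
      have := h.continuous_qt; fun_prop)
    (fun τ hτ x hx => by
      have hx' : x ∈ Icc (0:ℝ) 1 := uIcc_zero_one ▸ hx
      simpa using ((h.hasDerivAt_vt τ hτ x hx').fun_pow 2).fun_add
        ((h.hasDerivAt_qt τ hτ x hx').fun_pow 2))
    ht
  have hcontv := h.continuous_v.uncurry_left t
  have hval : (1/2) * ∫ x in (0:ℝ)..1, (2 * v t x * vt t x + 2 * q t x * qt t x)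
      = -∫ x in (0:ℝ)..1, a x * v t x ^ 2 := by
    rw [integral_congr (g := fun x => -2 * (vx t x * q t x + v t x * qx t x)
        + -2 * (a x * v t x ^ 2)) fun x hx => by
        have hx' : x ∈ Icc (0:ℝ) 1 := uIcc_zero_one ▸ hx
        simp only
        rw [show vt t x = -qx t x - a x * v t x by linarith [h.pde_v t ht x hx'],
          show qt t x = -vx t x by linarith [h.pde_q t ht x hx']]
        ring,
      integral_add ((h.intervalIntegrable_flux t).const_mul _)
        ((h.intervalIntegrable_a_mul (hcontv.fun_pow 2)).const_mul _),
      intervalIntegral.integral_const_mul, intervalIntegral.integral_const_mul,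
      h.integral_flux_eq_zero ht]
    ring
  exact hval ▸ hd.const_mul (1/2)

theorem integral_qx_mul_potential (h : DampedWaveSystem T a v q vt vx qt qx) (ht : t ∈ Ioo 0 T) :
    ∫ x in (0:ℝ)..1, qx t x * potential q t x = L2nsq (q t) := by
  have hq := h.continuous_q.uncurry_left t
  have hW := (continuous_potential h.continuous_q).uncurry_left t
  have hparts := integral_deriv_mul_eq_sub_of_hasDerivAt hq.continuousOn hW.continuousOn
    (fun x hx => h.hasDerivAt_qx t ht x (by simpa using hx))
    (fun x _ => hasDerivAt_potential h.continuous_q t x)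
    ((h.continuous_qx.uncurry_left t).intervalIntegrable 0 1) (hq.neg.intervalIntegrable 0 1)
  rw [(h.boundary t ht).1, (h.boundary t ht).2, zero_mul, zero_mul, sub_zero,
    integral_add (((h.continuous_qx.uncurry_left t).fun_mul hW).intervalIntegrable 0 1)
      ((hq.fun_mul hq.fun_neg).intervalIntegrable 0 1)] at hparts
  simp only [mul_neg, intervalIntegral.integral_neg] at hparts
  unfold L2nsq
  simp only [sq]
  linarith

theorem hasDerivAt_L2ip_potential (h : DampedWaveSystem T a v q vt vx qt qx) (ht : t ∈ Ioo 0 T) :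
    HasDerivAt (fun τ => L2ip (v τ) (potential q τ))
      (L2nsq (v t) - (∫ x in (0:ℝ)..1, v t x) ^ 2 - L2nsq (q t)
        - ∫ x in (0:ℝ)..1, a x * (v t x * potential q t x)) t := by
  have hv := h.continuous_v
  have hvt := h.continuous_vt
  have hW := continuous_potential h.continuous_q
  have hm := continuous_parametric_intervalIntegral_of_continuous' (μ := volume) hv 0 1
  have hd := hasDerivAt_intervalIntegral_of_continuous
    (g := fun τ x => v τ x * potential q τ x)
    (g' := fun τ x => vt τ x * potential q τ x + v τ x * (v τ x - ∫ y in (0:ℝ)..1, v τ y))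
    isOpen_Ioo (by fun_prop) (by fun_prop)
    (fun τ hτ x hx => (h.hasDerivAt_vt τ hτ x (uIcc_zero_one ▸ hx)).mul
      (h.hasDerivAt_potential_time hτ (uIcc_zero_one ▸ hx))) ht
  set m := ∫ y in (0:ℝ)..1, v t y
  have hval : ∫ x in (0:ℝ)..1, (vt t x * potential q t x + v t x * (v t x - m))
      = L2nsq (v t) - m ^ 2 - L2nsq (q t) - ∫ x in (0:ℝ)..1, a x * (v t x * potential q t x) := by
    have hvt' := hv.uncurry_left t
    have hWt := hW.uncurry_left t
    rw [integral_congr (g := fun x => (v t x ^ 2 - m * v t x)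
        - (qx t x * potential q t x + a x * (v t x * potential q t x))) fun x hx => by
        simp only
        rw [show vt t x = -qx t x - a x * v t x by
          linarith [h.pde_v t ht x (uIcc_zero_one ▸ hx)]]
        ring,
      integral_sub (((hvt'.fun_pow 2).fun_sub (hvt'.const_mul m)).intervalIntegrable 0 1)
        ((((h.continuous_qx.uncurry_left t).fun_mul hWt).intervalIntegrable 0 1).add
          (h.intervalIntegrable_a_mul (hvt'.fun_mul hWt))),
      integral_sub ((hvt'.fun_pow 2).intervalIntegrable 0 1)
        ((hvt'.const_mul m).intervalIntegrable 0 1),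
      integral_add (((h.continuous_qx.uncurry_left t).fun_mul hWt).intervalIntegrable 0 1)
        (h.intervalIntegrable_a_mul (hvt'.fun_mul hWt)),
      intervalIntegral.integral_const_mul, h.integral_qx_mul_potential ht]
    unfold L2nsq
    ring
  exact hval ▸ hd

theorem lyapunov_deriv_le (h : DampedWaveSystem T a v q vt vx qt qx) (ha₀ : 0 ≤ a₀)
    (hbd : ∀ x ∈ Icc (0:ℝ) 1, a₀ ≤ a x ∧ a x ≤ a₁) {α ε : ℝ} (hα : 0 ≤ α) (hε : 0 ≤ ε)
    (hv_coeff : α * (1 + ε) / 2 + ε * (1 + a₁ ^ 2 / 2) ≤ a₀) (hq_coeff : α * (1 + ε) ≤ ε) :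
    -(∫ x in (0:ℝ)..1, a x * v t x ^ 2) + ε * (L2nsq (v t) - (∫ x in (0:ℝ)..1, v t x) ^ 2
      - L2nsq (q t) - ∫ x in (0:ℝ)..1, a x * (v t x * potential q t x))
      ≤ -α * lyapunov ε v q t := by
  have hvt := h.continuous_v.uncurry_left t
  have hA : 0 ≤ L2nsq (v t) := integral_nonneg zero_le_one fun x _ => sq_nonneg _
  have hB : 0 ≤ L2nsq (q t) := integral_nonneg zero_le_one fun x _ => sq_nonneg _
  have hdiss : a₀ * L2nsq (v t) ≤ ∫ x in (0:ℝ)..1, a x * v t x ^ 2 := by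
    rw [L2nsq, ← intervalIntegral.integral_const_mul]
    exact integral_mono_on zero_le_one (((hvt.fun_pow 2).const_mul _).intervalIntegrable 0 1)
      (h.intervalIntegrable_a_mul (hvt.fun_pow 2))
      fun x hx => mul_le_mul_of_nonneg_right (hbd x hx).1 (sq_nonneg _)
  have hcross := neg_integral_mul_potential_le h.continuousOn_a
    (fun x hx => abs_le.2 ⟨by linarith [hbd x hx], (hbd x hx).2⟩) h.continuous_v h.continuous_q t
  have hG := (le_abs_self _).trans (abs_L2ip_potential_le_energy h.continuous_v h.continuous_q t)
  rw [energy_eq h.continuous_v h.continuous_q] at hG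
  unfold lyapunov
  rw [energy_eq h.continuous_v h.continuous_q]
  nlinarith [mul_nonneg (sub_nonneg.2 hv_coeff) hA, mul_nonneg (sub_nonneg.2 hq_coeff) hB,
    mul_le_mul_of_nonneg_left hG (mul_nonneg hα hε), mul_le_mul_of_nonneg_left hcross hε,
    mul_nonneg hε (sq_nonneg (∫ x in (0:ℝ)..1, v t x))]

theorem energy_le (h : DampedWaveSystem T a v q vt vx qt qx) (ha₀ : 0 < a₀)
    (hbd : ∀ x ∈ Icc (0:ℝ) 1, a₀ ≤ a x ∧ a x ≤ a₁) {s t : ℝ} (hs : 0 ≤ s) (hst : s ≤ t)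
    (htT : t ≤ T) :
    energy v q t ≤ 3 * Real.exp (-(decayRate a₀ a₁ * (t - s))) * energy v q s := by
  have ha₀₁ : a₀ ≤ a₁ := (hbd 0 (left_mem_Icc.2 zero_le_one)).1.trans
    (hbd 0 (left_mem_Icc.2 zero_le_one)).2
  have hα := decayRate_pos ha₀ ha₀₁
  have hα₃ := decayRate_le_one_third ha₀ ha₀₁
  have hαa := decayRate_mul_le ha₀ ha₀₁
  set α := decayRate a₀ a₁
  set ε := 3/2 * α with hε_def
  have hε : 0 ≤ ε := by positivity
  have hε₂ : ε ≤ 1/2 := by linarith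
  have hv_coeff : α * (1 + ε) / 2 + ε * (1 + a₁ ^ 2 / 2) ≤ a₀ := by
    nlinarith [mul_le_mul_of_nonneg_left hα₃ hα.le]
  have hq_coeff : α * (1 + ε) ≤ ε := by nlinarith
  have hsub : Ioo s t ⊆ Ioo 0 T := Ioo_subset_Ioo hs htT
  have hL : lyapunov ε v q t ≤ lyapunov ε v q s * Real.exp (-α * (t - s)) :=
    le_mul_exp_of_hasDerivAt_le hst
      (continuous_lyapunov h.continuous_v h.continuous_q ε).continuousOn
      (fun τ hτ => (h.hasDerivAt_energy (hsub hτ)).add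
        ((h.hasDerivAt_L2ip_potential (hsub hτ)).const_mul ε))
      (fun τ _ => h.lyapunov_deriv_le ha₀.le hbd hα.le hε hv_coeff hq_coeff)
  have hGE := abs_L2ip_potential_le_energy h.continuous_v h.continuous_q
  have hG := fun r => abs_le.1 (hGE r)
  have hE := fun r => (abs_nonneg _).trans (hGE r)
  have hexp := Real.exp_pos (-α * (t - s))
  unfold lyapunov at hL
  calc energy v q t ≤ 2 * (energy v q t + ε * L2ip (v t) (potential q t)) := by
        nlinarith [mul_le_mul_of_nonneg_left (hG t).1 hε, mul_le_mul_of_nonneg_right hε₂ (hE t)]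
    _ ≤ 2 * ((energy v q s + ε * L2ip (v s) (potential q s)) * Real.exp (-α * (t - s))) := by
        linarith
    _ ≤ 3 * Real.exp (-(α * (t - s))) * energy v q s := by
        rw [neg_mul] at hexp ⊢
        nlinarith [mul_le_mul_of_nonneg_right (mul_le_mul_of_nonneg_left (hG s).2 hε) hexp.le,
          mul_le_mul_of_nonneg_right hε₂ (mul_nonneg (hE s) hexp.le)]

end DampedWaveSystem

/-- Exponential decay of the first-order energy `E¹` for twice continuously
differentiable classical solutions of the damped wave system. -/
theorem stmt2 (T : ℝ) (hT : 0 < T) (a : ℝ → ℝ) (a₀ a₁ : ℝ)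
    (ha : ContinuousOn a (Icc (0:ℝ) 1)) (ha₀ : 0 < a₀)
    (hbd : ∀ x ∈ Icc (0:ℝ) 1, a₀ ≤ a x ∧ a x ≤ a₁)
    (u p ut ux pt px : ℝ → ℝ → ℝ)
    (hsol : IsClassicalSolution T a u p ut ux pt px)
    (hu2 : ContDiffOn ℝ 2 (Function.uncurry u) (Icc (0:ℝ) T ×ˢ Icc (0:ℝ) 1))
    (hp2 : ContDiffOn ℝ 2 (Function.uncurry p) (Icc (0:ℝ) T ×ˢ Icc (0:ℝ) 1)) :
    ∀ s t : ℝ, 0 ≤ s → s ≤ t → t ≤ T →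
      (1/2) * (∫ x in (0:ℝ)..1, ((ut t x) ^ 2 + (pt t x) ^ 2))
        ≤ 3 * Real.exp (-((4/3) * a₀ ^ 3 / (8 * a₀ ^ 2 + 4 * a₀ ^ 2 * a₁ + 2 * a₀ * a₁ + a₁ ^ 4)
              * (t - s)))
          * ((1/2) * ∫ x in (0:ℝ)..1, ((ut s x) ^ 2 + (pt s x) ^ 2)) := by
  intro s t hs hst htT
  obtain ⟨vt, vx, qt, qx, hsys⟩ := hsol.dampedWaveSystem_timeDeriv hT ha hu2 hp2
  have henergy : ∀ r ∈ Icc (0:ℝ) T,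
      energy (rectExtend hT.le zero_le_one ut) (rectExtend hT.le zero_le_one pt) r
        = (1/2) * ∫ x in (0:ℝ)..1, ((ut r x) ^ 2 + (pt r x) ^ 2) := fun r hr => by
    unfold energy
    congr 1
    exact integral_congr fun x hx => by simp only [rectExtend_of_mem hr (uIcc_zero_one ▸ hx)]
  rw [← henergy t ⟨hs.trans hst, htT⟩, ← henergy s ⟨hs, hst.trans htT⟩]
  exact hsys.energy_le ha₀ hbd hs hst htT
end

section
/- Let a : ℝ → ℝ be continuous on [0,1] with 0 < a₀ ≤ a(x) ≤ a₁ for all x ∈ [0,1], let (u,p) be a classical solution of the damped wave system on [0,T], and let ε ∈ ℝ with |ε| ≤ a₀/(4 + 2a₁). Then for all t ∈ [0,T]: (1/2)·E¹(t) ≤ E¹_ε(t) ≤ (3/2)·E¹(t), where E¹(t) = (1/2) ∫₀¹ ((∂ₜu(t,x))² + (∂ₜp(t,x))²) dx and E¹_ε(t) = E¹(t) + ε·∫₀¹ ∂ₜu(t,x)·u(t,x) dx. -/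
open MeasureTheory Set

/-!
Testing the first equation with `u` and integrating `(u, ∂ₓp)` by parts against the boundary
condition gives `a₀‖u‖² ≤ -(∂ₜu, u) - (∂ₜp, p)`, while `p(t,0) = 0` and `∂ₓp = -∂ₜu - a u` give
`‖p(t)‖_∞ ≤ ‖∂ₜu‖ + a₁‖u‖`. Hence `a₀‖u‖² ≤ ‖u‖‖∂ₜu‖ + ‖∂ₜp‖(‖∂ₜu‖ + a₁‖u‖)`, a quadratic
inequality for `‖u‖` which forces `4a₀‖u‖‖∂ₜu‖ ≤ (4 + 2a₁)(‖∂ₜu‖² + ‖∂ₜp‖²)`. So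
`|ε(∂ₜu, u)| ≤ E¹/2` under the assumed bound on `ε`.
-/

section L2

variable {f g : ℝ → ℝ}

lemma L2nsq_nonneg (f : ℝ → ℝ) : 0 ≤ L2nsq f :=
  intervalIntegral.integral_nonneg zero_le_one fun _ _ => sq_nonneg _

lemma L2nrm_nonneg (f : ℝ → ℝ) : 0 ≤ L2nrm f := Real.sqrt_nonneg _

lemma L2nrm_sq (f : ℝ → ℝ) : L2nrm f ^ 2 = L2nsq f := Real.sq_sqrt (L2nsq_nonneg f)

lemma L2ip_sq_le (hf : ContinuousOn f (Icc 0 1)) (hg : ContinuousOn g (Icc 0 1)) :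
    L2ip f g ^ 2 ≤ L2nsq f * L2nsq g := by
  have hint {h : ℝ → ℝ} (hh : ContinuousOn h (Icc 0 1)) : IntervalIntegrable h volume 0 1 :=
    hh.intervalIntegrable_of_Icc zero_le_one
  have hff : IntervalIntegrable (fun x => f x ^ 2) volume 0 1 := hint (hf.pow 2)
  have hfg : IntervalIntegrable (fun x => f x * g x) volume 0 1 := hint (hf.mul hg)
  have hgg : IntervalIntegrable (fun x => g x ^ 2) volume 0 1 := hint (hg.pow 2)
  have hquad (s : ℝ) : 0 ≤ L2nsq f * (s * s) + 2 * L2ip f g * s + L2nsq g := by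
    have hexpand : ∫ x in (0:ℝ)..1, (s * f x + g x) ^ 2
        = L2nsq f * (s * s) + 2 * L2ip f g * s + L2nsq g := by
      calc ∫ x in (0:ℝ)..1, (s * f x + g x) ^ 2
          = ∫ x in (0:ℝ)..1, (s * s) * f x ^ 2 + (2 * s) * (f x * g x) + g x ^ 2 := by
            congr 1; ext x; ring
        _ = _ := by
          rw [intervalIntegral.integral_add ((hff.const_mul _).add (hfg.const_mul _)) hgg,
            intervalIntegral.integral_add (hff.const_mul _) (hfg.const_mul _),
            intervalIntegral.integral_const_mul, intervalIntegral.integral_const_mul,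
            L2nsq, L2nsq, L2ip]
          ring
    exact hexpand ▸ intervalIntegral.integral_nonneg zero_le_one fun _ _ => sq_nonneg _
  have hdisc := discrim_le_zero hquad
  rw [discrim] at hdisc
  nlinarith

lemma abs_L2ip_le (hf : ContinuousOn f (Icc 0 1)) (hg : ContinuousOn g (Icc 0 1)) :
    |L2ip f g| ≤ L2nrm f * L2nrm g := by
  rw [← Real.sqrt_sq_eq_abs, L2nrm, L2nrm, ← Real.sqrt_mul (L2nsq_nonneg f)]
  exact Real.sqrt_le_sqrt (L2ip_sq_le hf hg)

lemma integral_abs_le_L2nrm (hf : ContinuousOn f (Icc 0 1)) :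
    ∫ x in (0:ℝ)..1, |f x| ≤ L2nrm f := by
  have hone : L2nrm (fun _ => 1) = 1 := by simp [L2nrm, L2nsq]
  have habs : L2nrm (fun x => |f x|) = L2nrm f := by simp only [L2nrm, L2nsq, sq_abs]
  have h := abs_L2ip_le hf.abs (continuousOn_const (c := (1:ℝ)))
  rw [hone, habs, mul_one, L2ip] at h
  simp only [mul_one] at h
  exact (le_abs_self _).trans h

lemma abs_L2ip_le_of_abs_le {M : ℝ} (hf : ContinuousOn f (Icc 0 1))
    (hg : ContinuousOn g (Icc 0 1)) (hgM : ∀ x ∈ Icc (0:ℝ) 1, |g x| ≤ M) :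
    |L2ip f g| ≤ L2nrm f * M := by
  have hM : 0 ≤ M := (abs_nonneg _).trans (hgM 0 ⟨le_rfl, zero_le_one⟩)
  calc |L2ip f g| ≤ ∫ x in (0:ℝ)..1, |f x * g x| :=
        intervalIntegral.abs_integral_le_integral_abs zero_le_one
    _ ≤ ∫ x in (0:ℝ)..1, |f x| * M :=
        intervalIntegral.integral_mono_on zero_le_one
          ((hf.mul hg).abs.intervalIntegrable_of_Icc zero_le_one)
          (hf.abs.intervalIntegrable_of_Icc zero_le_one |>.mul_const M) fun x hx => by
            rw [abs_mul]; gcongr; exact hgM x hx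
    _ = (∫ x in (0:ℝ)..1, |f x|) * M := intervalIntegral.integral_mul_const _ _
    _ ≤ L2nrm f * M := by gcongr; exact integral_abs_le_L2nrm hf

end L2

lemma abs_le_integral_abs_deriv_of_eq_zero {p p' : ℝ → ℝ} {a b x : ℝ}
    (hp : ∀ y ∈ Icc a b, HasDerivAt p (p' y) y) (hp' : ContinuousOn p' (Icc a b)) (hpa : p a = 0)
    (hx : x ∈ Icc a b) : |p x| ≤ ∫ y in a..b, |p' y| := by
  have hsub : Icc a x ⊆ Icc a b := Icc_subset_Icc_right hx.2
  have hftc : ∫ y in a..x, p' y = p x := by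
    rw [intervalIntegral.integral_eq_sub_of_hasDerivAt
      (fun y hy => hp y (hsub (uIcc_of_le hx.1 ▸ hy)))
      ((hp'.mono hsub).intervalIntegrable_of_Icc hx.1), hpa, sub_zero]
  calc |p x| = |∫ y in a..x, p' y| := by rw [hftc]
    _ ≤ ∫ y in a..x, |p' y| := intervalIntegral.abs_integral_le_integral_abs hx.1
    _ ≤ ∫ y in a..b, |p' y| :=
        intervalIntegral.integral_mono_interval le_rfl hx.1 hx.2 (.of_forall fun _ => abs_nonneg _)
          (hp'.abs.intervalIntegrable_of_Icc (hx.1.trans hx.2))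

lemma integral_mul_deriv_eq_neg_of_eq_zero {u u' v v' : ℝ → ℝ} {a b : ℝ} (hab : a ≤ b)
    (hu : ∀ x ∈ Icc a b, HasDerivAt u (u' x) x) (hv : ∀ x ∈ Icc a b, HasDerivAt v (v' x) x)
    (hu' : IntervalIntegrable u' volume a b) (hv' : IntervalIntegrable v' volume a b)
    (hva : v a = 0) (hvb : v b = 0) :
    ∫ x in a..b, u x * v' x = -∫ x in a..b, u' x * v x := by
  rw [intervalIntegral.integral_mul_deriv_eq_deriv_mul (fun x hx => hu x (uIcc_of_le hab ▸ hx))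
    (fun x hx => hv x (uIcc_of_le hab ▸ hx)) hu' hv', hva, hvb]
  ring

lemma four_mul_mul_le_of_sq_le {a₀ a₁ U v q : ℝ} (ha₀ : 0 ≤ a₀) (ha₀₁ : a₀ ≤ a₁)
    (hv : 0 ≤ v) (hq : 0 ≤ q) (h : a₀ * U ^ 2 ≤ U * v + q * (v + a₁ * U)) :
    4 * a₀ * U * v ≤ (4 + 2 * a₁) * (v ^ 2 + q ^ 2) := by
  set X := v + a₁ * q
  set R := 4 * q ^ 2 + 2 * a₁ * (v - q) ^ 2
  have ha₁ : 0 ≤ a₁ := ha₀.trans ha₀₁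
  have hR : 0 ≤ R := by positivity
  have hsplit : (4 + 2 * a₁) * (v ^ 2 + q ^ 2) = 4 * v * X + R := by ring
  have hpoly : R ^ 2 + 4 * v * X * R - 16 * a₁ * q * v ^ 3
      = 4 * (q ^ 2 + v ^ 2) * (2 * q - a₁ * (v - q)) ^ 2 + 8 * a₁ * (v * (v - q)) ^ 2 := by ring
  have hroot : (a₀ * U - X) * (a₀ * U) ≤ a₁ * q * v := by
    nlinarith [mul_le_mul_of_nonneg_left h ha₀, mul_le_mul_of_nonneg_right ha₀₁ (mul_nonneg hq hv)]
  rw [hsplit]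
  -- `hroot` bounds `a₀U - X` by the positive root `D` of `D (D + X) = a₁qv`, and `hpoly` says
  -- that `R / (4v)` is at least that root.
  by_contra! H
  have hD : R < 4 * v * (a₀ * U - X) := by linarith
  nlinarith [mul_self_lt_mul_self hR hD,
    mul_le_mul_of_nonneg_right hD.le (by positivity : 0 ≤ 4 * v * X),
    mul_le_mul_of_nonneg_left hroot (sq_nonneg v),
    mul_nonneg (sq_nonneg (2 * q - a₁ * (v - q))) (by positivity : (0:ℝ) ≤ q ^ 2 + v ^ 2),
    mul_nonneg ha₁ (sq_nonneg (v * (v - q)))]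

namespace IsClassicalSolution

variable {T : ℝ} {a : ℝ → ℝ} {u p ut ux pt px : ℝ → ℝ → ℝ} {t : ℝ}

lemma continuousOn_u (hsol : IsClassicalSolution T a u p ut ux pt px) (ht : t ∈ Icc 0 T) :
    ContinuousOn (u t) (Icc 0 1) :=
  fun x hx => (hsol.1 t ht x hx).2.1.continuousAt.continuousWithinAt

lemma continuousOn_p (hsol : IsClassicalSolution T a u p ut ux pt px) (ht : t ∈ Icc 0 T) :
    ContinuousOn (p t) (Icc 0 1) :=
  fun x hx => (hsol.1 t ht x hx).2.2.2.continuousAt.continuousWithinAt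

lemma continuousOn_ut (hsol : IsClassicalSolution T a u p ut ux pt px) (ht : t ∈ Icc 0 T) :
    ContinuousOn (ut t) (Icc 0 1) :=
  hsol.2.1.uncurry_left t ht

lemma continuousOn_pt (hsol : IsClassicalSolution T a u p ut ux pt px) (ht : t ∈ Icc 0 T) :
    ContinuousOn (pt t) (Icc 0 1) :=
  hsol.2.2.2.1.uncurry_left t ht

lemma abs_p_le_L2nrm {a₁ : ℝ} (hsol : IsClassicalSolution T a u p ut ux pt px)
    (ht : t ∈ Icc 0 T) (ha : ∀ x ∈ Icc (0:ℝ) 1, |a x| ≤ a₁) {x : ℝ} (hx : x ∈ Icc 0 1) :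
    |p t x| ≤ L2nrm (ut t) + a₁ * L2nrm (u t) := by
  have cu := hsol.continuousOn_u ht
  obtain ⟨hder, hut, -, -, hpx, hpde, hbc⟩ := hsol
  have cut := hut.uncurry_left t ht
  have cpx := hpx.uncurry_left t ht
  have ha₁ : 0 ≤ a₁ := (abs_nonneg _).trans (ha 0 ⟨le_rfl, zero_le_one⟩)
  calc |p t x| ≤ ∫ y in (0:ℝ)..1, |px t y| :=
        abs_le_integral_abs_deriv_of_eq_zero (fun y hy => (hder t ht y hy).2.2.2) cpx
          (hbc t ht).1 hx
    _ ≤ ∫ y in (0:ℝ)..1, |ut t y| + a₁ * |u t y| := by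
        refine intervalIntegral.integral_mono_on zero_le_one
          (cpx.abs.intervalIntegrable_of_Icc zero_le_one)
          ((cut.abs.add (cu.abs.const_smul a₁)).intervalIntegrable_of_Icc zero_le_one) ?_
        intro y hy
        rw [show px t y = -(ut t y + a y * u t y) by linarith [(hpde t ht y hy).1], abs_neg]
        calc |ut t y + a y * u t y| ≤ |ut t y| + |a y| * |u t y| := by
              rw [← abs_mul]; exact abs_add_le _ _
          _ ≤ |ut t y| + a₁ * |u t y| := by gcongr; exact ha y hy
    _ = (∫ y in (0:ℝ)..1, |ut t y|) + a₁ * ∫ y in (0:ℝ)..1, |u t y| := by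
        rw [intervalIntegral.integral_add (cut.abs.intervalIntegrable_of_Icc zero_le_one)
          ((cu.abs.intervalIntegrable_of_Icc zero_le_one).const_mul a₁),
          intervalIntegral.integral_const_mul]
    _ ≤ L2nrm (ut t) + a₁ * L2nrm (u t) := by
        gcongr
        · exact integral_abs_le_L2nrm cut
        · exact integral_abs_le_L2nrm cu

lemma L2ip_u_px_eq (hsol : IsClassicalSolution T a u p ut ux pt px) (ht : t ∈ Icc 0 T) :
    L2ip (u t) (px t) = L2ip (pt t) (p t) := by
  obtain ⟨hder, -, hux, -, hpx, hpde, hbc⟩ := hsol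
  rw [L2ip, integral_mul_deriv_eq_neg_of_eq_zero zero_le_one
    (fun x hx => (hder t ht x hx).2.1) (fun x hx => (hder t ht x hx).2.2.2)
    ((hux.uncurry_left t ht).intervalIntegrable_of_Icc zero_le_one)
    ((hpx.uncurry_left t ht).intervalIntegrable_of_Icc zero_le_one) (hbc t ht).1 (hbc t ht).2,
    L2ip, ← intervalIntegral.integral_neg]
  refine intervalIntegral.integral_congr fun x hx => ?_
  rw [uIcc_of_le zero_le_one] at hx
  simp only [show ux t x = -pt t x by linarith [(hpde t ht x hx).2], neg_mul, neg_neg]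

lemma mul_L2nsq_u_le {a₀ : ℝ} (hsol : IsClassicalSolution T a u p ut ux pt px)
    (ht : t ∈ Icc 0 T) (ha : ∀ x ∈ Icc (0:ℝ) 1, a₀ ≤ a x) :
    a₀ * L2nsq (u t) ≤ -L2ip (u t) (ut t) - L2ip (pt t) (p t) := by
  have cu := hsol.continuousOn_u ht
  rw [← hsol.L2ip_u_px_eq ht]
  obtain ⟨-, hut, -, -, hpx, hpde, -⟩ := hsol
  have iuut : IntervalIntegrable (fun x => u t x * ut t x) volume 0 1 :=
    (cu.mul (hut.uncurry_left t ht)).intervalIntegrable_of_Icc zero_le_one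
  have iupx : IntervalIntegrable (fun x => u t x * px t x) volume 0 1 :=
    (cu.mul (hpx.uncurry_left t ht)).intervalIntegrable_of_Icc zero_le_one
  calc a₀ * L2nsq (u t) = ∫ x in (0:ℝ)..1, a₀ * u t x ^ 2 :=
        (intervalIntegral.integral_const_mul _ _).symm
    _ ≤ ∫ x in (0:ℝ)..1, -(u t x * ut t x) - u t x * px t x := by
        refine intervalIntegral.integral_mono_on zero_le_one
          ((cu.pow 2).intervalIntegrable_of_Icc zero_le_one |>.const_mul a₀)
          (iuut.neg.sub iupx) fun x hx => ?_
        have hau : a x * u t x ^ 2 = -(u t x * ut t x) - u t x * px t x := by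
          linear_combination u t x * (hpde t ht x hx).1
        linarith [mul_le_mul_of_nonneg_right (ha x hx) (sq_nonneg (u t x))]
    _ = -L2ip (u t) (ut t) - L2ip (u t) (px t) := by
        rw [intervalIntegral.integral_sub (f := fun x => -(u t x * ut t x)) iuut.neg iupx,
          intervalIntegral.integral_neg]
        rfl

lemma mul_L2nrm_u_sq_le {a₀ a₁ : ℝ} (hsol : IsClassicalSolution T a u p ut ux pt px)
    (ht : t ∈ Icc 0 T) (ha₀ : 0 ≤ a₀) (hbd : ∀ x ∈ Icc (0:ℝ) 1, a₀ ≤ a x ∧ a x ≤ a₁) :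
    a₀ * L2nrm (u t) ^ 2 ≤ L2nrm (u t) * L2nrm (ut t)
      + L2nrm (pt t) * (L2nrm (ut t) + a₁ * L2nrm (u t)) := by
  have cu := hsol.continuousOn_u ht
  have cut := hsol.continuousOn_ut ht
  have cpt := hsol.continuousOn_pt ht
  have habs : ∀ x ∈ Icc (0:ℝ) 1, |a x| ≤ a₁ := fun x hx => by
    rw [abs_of_nonneg (ha₀.trans (hbd x hx).1)]
    exact (hbd x hx).2
  have hu_ut := abs_L2ip_le cu cut
  have hpt_p := abs_L2ip_le_of_abs_le cpt (hsol.continuousOn_p ht)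
    fun x hx => hsol.abs_p_le_L2nrm ht habs hx
  rw [L2nrm_sq]
  linarith [hsol.mul_L2nsq_u_le ht fun x hx => (hbd x hx).1, neg_abs_le (L2ip (u t) (ut t)),
    neg_abs_le (L2ip (pt t) (p t))]

end IsClassicalSolution

lemma abs_mul_le_of_mul_sq_le {a₀ a₁ U v q ε J : ℝ} (ha₀ : 0 ≤ a₀) (ha₀₁ : a₀ ≤ a₁)
    (hv : 0 ≤ v) (hq : 0 ≤ q) (h : a₀ * U ^ 2 ≤ U * v + q * (v + a₁ * U))
    (hε : |ε| ≤ a₀ / (4 + 2 * a₁)) (hJ : |J| ≤ U * v) :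
    |ε * J| ≤ (v ^ 2 + q ^ 2) / 4 := by
  have hpos : 0 < 4 + 2 * a₁ := by linarith
  have hUv : 0 ≤ U * v := (abs_nonneg J).trans hJ
  calc |ε * J| = |ε| * |J| := abs_mul ε J
    _ ≤ a₀ / (4 + 2 * a₁) * (U * v) := by gcongr
    _ ≤ (v ^ 2 + q ^ 2) / 4 := by
        rw [div_mul_eq_mul_div, div_le_iff₀ hpos]
        linarith [four_mul_mul_le_of_sq_le ha₀ ha₀₁ hv hq h]

theorem stmt5_general (T : ℝ) (a : ℝ → ℝ) (a₀ a₁ : ℝ)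
    (ha₀ : 0 < a₀)
    (hbd : ∀ x ∈ Icc (0:ℝ) 1, a₀ ≤ a x ∧ a x ≤ a₁)
    (u p ut ux pt px : ℝ → ℝ → ℝ)
    (hsol : IsClassicalSolution T a u p ut ux pt px)
    (ε : ℝ) (hε : |ε| ≤ a₀ / (4 + 2 * a₁)) :
    ∀ t ∈ Icc (0:ℝ) T,
      (1/2) * ((1/2) * ∫ x in (0:ℝ)..1, ((ut t x) ^ 2 + (pt t x) ^ 2))
        ≤ (1/2) * (∫ x in (0:ℝ)..1, ((ut t x) ^ 2 + (pt t x) ^ 2))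
            + ε * ∫ x in (0:ℝ)..1, ut t x * u t x ∧
      (1/2) * (∫ x in (0:ℝ)..1, ((ut t x) ^ 2 + (pt t x) ^ 2))
          + ε * ∫ x in (0:ℝ)..1, ut t x * u t x
        ≤ (3/2) * ((1/2) * ∫ x in (0:ℝ)..1, ((ut t x) ^ 2 + (pt t x) ^ 2)) := by
  intro t ht
  have cut := hsol.continuousOn_ut ht
  have cpt := hsol.continuousOn_pt ht
  have hE : ∫ x in (0:ℝ)..1, ((ut t x) ^ 2 + (pt t x) ^ 2)
      = L2nrm (ut t) ^ 2 + L2nrm (pt t) ^ 2 := by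
    rw [L2nrm_sq, L2nrm_sq, intervalIntegral.integral_add (f := fun x => ut t x ^ 2)
      (g := fun x => pt t x ^ 2) ((cut.pow 2).intervalIntegrable_of_Icc zero_le_one)
      ((cpt.pow 2).intervalIntegrable_of_Icc zero_le_one)]
    rfl
  have hJ : |L2ip (ut t) (u t)| ≤ L2nrm (u t) * L2nrm (ut t) :=
    mul_comm (L2nrm (ut t)) _ ▸ abs_L2ip_le cut (hsol.continuousOn_u ht)
  obtain ⟨ha₀a, haa₁⟩ := hbd 0 ⟨le_rfl, zero_le_one⟩
  have hcross := abs_mul_le_of_mul_sq_le ha₀.le (ha₀a.trans haa₁) (L2nrm_nonneg _)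
    (L2nrm_nonneg _) (hsol.mul_L2nrm_u_sq_le ht ha₀.le hbd) hε hJ
  change _ ≤ _ + ε * L2ip (ut t) (u t) ∧ _ + ε * L2ip (ut t) (u t) ≤ _
  rw [hE]
  constructor <;> linarith [abs_le.mp hcross]

/-- Equivalence of the first-order energy `E¹` and the modified energy
`E¹_ε = E¹ + ε (∂ₜu, u)` for `|ε| ≤ a₀/(4 + 2a₁)`. -/
theorem stmt5 (T : ℝ) (hT : 0 < T) (a : ℝ → ℝ) (a₀ a₁ : ℝ)
    (ha : ContinuousOn a (Icc (0:ℝ) 1)) (ha₀ : 0 < a₀)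
    (hbd : ∀ x ∈ Icc (0:ℝ) 1, a₀ ≤ a x ∧ a x ≤ a₁)
    (u p ut ux pt px : ℝ → ℝ → ℝ)
    (hsol : IsClassicalSolution T a u p ut ux pt px)
    (ε : ℝ) (hε : |ε| ≤ a₀ / (4 + 2 * a₁)) :
    ∀ t ∈ Icc (0:ℝ) T,
      (1/2) * ((1/2) * ∫ x in (0:ℝ)..1, ((ut t x) ^ 2 + (pt t x) ^ 2))
        ≤ (1/2) * (∫ x in (0:ℝ)..1, ((ut t x) ^ 2 + (pt t x) ^ 2))
            + ε * ∫ x in (0:ℝ)..1, ut t x * u t x ∧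
      (1/2) * (∫ x in (0:ℝ)..1, ((ut t x) ^ 2 + (pt t x) ^ 2))
          + ε * ∫ x in (0:ℝ)..1, ut t x * u t x
        ≤ (3/2) * ((1/2) * ∫ x in (0:ℝ)..1, ((ut t x) ^ 2 + (pt t x) ^ 2)) :=
  stmt5_general T a a₀ a₁ ha₀ hbd u p ut ux pt px hsol ε hε
end
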